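/- Suppose F is a k-wise intersecting family of r-subsets of [n] with r < (k-1)n/k and |F| ≥ (1-δ) C(n-1, r-1). Then the number of cyclic orders σ on [n] for which fewer than r members of F are σ-intervals is at most r δ (n-1)!. -/

import Mathlib

/-!
Double counting over the pairs (A, σ) with A ∈ F an interval of the cyclic order σ. Each r-set is
an interval in at least r!(n-r)! of the (n-1)! cyclic orders, and by Frankl's circle lemma each
cyclic order has at most r members of F as intervals; since C(n-1,r-1) r!(n-r)! = r (n-1)!, every
unsaturated order costs at least one pair against the maximum r (n-1)!.

Circle lemma: let S ⊆ ℤ/n be the starting points of the intervals of length r that lie in F and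
suppose |S| > r, so that fewer than L = n - r points are missing from S. Jump greedily from a point
of S to the furthest point of S at most L ahead. Along a periodic orbit the shortfalls of the jumps
are witnessed by disjoint sets of points missing from S, so the orbit loses less than one full jump
in total; since kL ≥ n, some k consecutive jumps go all the way round, and the intervals starting
at the k points they leave from have no common point.
-/

/-- Two bijections `ZMod n ≃ Fin n` define the same cyclic order on `[n]` iff they
differ by a rotation of positions. -/
def rotSetoid (n : ℕ) : Setoid (ZMod n ≃ Fin n) where
  r σ τ := ∃ c : ZMod n, ∀ x, σ x = τ (x + c)
  iseqv := by
    refine ⟨fun σ => ⟨0, fun x => by rw [add_zero]⟩, ?_, ?_⟩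
    · rintro σ τ ⟨c, h⟩
      refine ⟨-c, fun x => ?_⟩
      rw [h (x + -c), add_assoc, neg_add_cancel, add_zero]
    · rintro σ τ ρ ⟨c, h⟩ ⟨d, h'⟩
      exact ⟨c + d, fun x => by rw [h, h', add_assoc]⟩

/-- The `σ`-interval of length `r` starting at position `x`. -/
def cInterval (n r : ℕ) (σ : ZMod n ≃ Fin n) (x : ZMod n) : Finset (Fin n) :=
  (Finset.range r).image (fun (i : ℕ) => σ (x + (i : ZMod n)))

/-- The number of members of `F` that are intervals in the cyclic order `q`. -/
noncomputable def intervalCount (n r : ℕ) (F : Finset (Finset (Fin n))) (q : Quotient (rotSetoid n)) : ℕ :=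
  Nat.card {A : Finset (Fin n) // A ∈ F ∧
    ∃ σ : ZMod n ≃ Fin n, Quotient.mk (rotSetoid n) σ = q ∧
      ∃ x : ZMod n, A = cInterval n r σ x}

open Finset Function
open scoped Nat

theorem Function.exists_iterate_mem_periodicPts {α : Type*} [Finite α] (f : α → α) (x : α) :
    ∃ m, f^[m] x ∈ periodicPts f := by
  obtain ⟨m, l, heq, hne⟩ : ∃ m l, f^[m] x = f^[l] x ∧ m ≠ l := by
    simpa [Injective] using not_injective_infinite_finite (f^[·] x)
  wlog hlt : m < l generalizing m l
  · exact this l m heq.symm hne.symm (by omega)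
  refine ⟨m, mk_mem_periodicPts (Nat.sub_pos_of_lt hlt) ?_⟩
  rw [IsPeriodicPt, IsFixedPt, ← iterate_add_apply, Nat.sub_add_cancel hlt.le, heq]

theorem Finset.natCard_subtype_mem_and {α : Type*} (F : Finset α) (p : α → Prop)
    [DecidablePred p] : Nat.card {a // a ∈ F ∧ p a} = #{a ∈ F | p a} := by
  rw [← Nat.card_eq_finsetCard]
  exact Nat.card_congr (Equiv.subtypeEquivRight fun a => mem_filter.symm)

theorem card_mul_add_card_lt_le_mul {α β : Type*} [Finite β] (F : Finset α) (R : α → β → Prop)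
    {r c : ℕ} (hrow : ∀ b, Nat.card {a // a ∈ F ∧ R a b} ≤ r)
    (hcol : ∀ a ∈ F, c ≤ Nat.card {b // R a b}) :
    #F * c + Nat.card {b // Nat.card {a // a ∈ F ∧ R a b} < r} ≤ r * Nat.card β := by
  classical
  have := Fintype.ofFinite β
  simp only [natCard_subtype_mem_and, Nat.card_eq_fintype_card, Fintype.card_subtype] at *
  have hrows : ∑ b, #{a ∈ F | R a b} = ∑ a ∈ F, #{b | R a b} :=
    (sum_card_bipartiteAbove_eq_sum_card_bipartiteBelow (s := F) (t := univ) R).symm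
  calc #F * c + #{b | #{a ∈ F | R a b} < r}
      ≤ ∑ a ∈ F, #{b | R a b} + ∑ b, if #{a ∈ F | R a b} < r then 1 else 0 := by
        rw [card_filter, ← smul_eq_mul, ← sum_const]
        gcongr with a ha
        exact hcol a ha
    _ = ∑ b, (#{a ∈ F | R a b} + if #{a ∈ F | R a b} < r then 1 else 0) := by
        rw [sum_add_distrib, hrows]
    _ ≤ ∑ _b : β, r := sum_le_sum fun b _ => by split_ifs with h <;> linarith [hrow b]
    _ = r * Fintype.card β := by rw [sum_const, card_univ, smul_eq_mul, mul_comm]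

theorem exists_le_sum_range_add {a : ℕ → ℕ} {T n k L : ℕ} (hT : 0 < T)
    (hdvd : n ∣ ∑ i ∈ range T, a i) (hloss : T * L < ∑ i ∈ range T, a i + L)
    (hkL : n ≤ k * L) : ∃ i, n ≤ ∑ j ∈ range k, a (i + j) := by
  -- Otherwise the first `k * W` terms add up to less than `W * n = ∑ i < T, a i`, forcing
  -- `T > k * W`; but then `W * n > (T - 1) * L ≥ k * W * L ≥ W * n`.
  by_contra! hshort
  obtain ⟨W, hW⟩ := hdvd
  have blocks : ∀ m, ∑ i ∈ range (k * m), a i + m ≤ m * n := by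
    intro m
    induction m with
    | zero => simp
    | succ m ih =>
      rw [Nat.mul_succ, sum_range_add]
      linarith [hshort (k * m)]
  rcases le_or_gt T (k * W) with hle | hlt
  · have hW0 : 0 < W := Nat.pos_of_ne_zero (by rintro rfl; omega)
    have : ∑ i ∈ range T, a i ≤ ∑ i ∈ range (k * W), a i :=
      sum_le_sum_of_subset (range_subset_range.mpr hle)
    linarith [blocks W, mul_comm n W]
  · have hTL : (k * W + 1) * L ≤ T * L := Nat.mul_le_mul_right L hlt
    have hWn : W * n ≤ W * (k * L) := Nat.mul_le_mul_left W hkL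
    nlinarith

namespace ZMod

variable {n r : ℕ} [NeZero n]

theorem card_val_lt (hrn : r ≤ n) : Fintype.card {i : ZMod n // i.val < r} = r :=
  (Fintype.card_congr
    { toFun := fun i => ⟨i.1.val, i.2⟩
      invFun := fun m => ⟨m, by rw [val_cast_of_lt (m.2.trans_le hrn)]; exact m.2⟩
      left_inv := fun i => Subtype.ext (natCast_zmod_val i.1)
      right_inv := fun m => Fin.ext (val_cast_of_lt (m.2.trans_le hrn)) }).trans
    (Fintype.card_fin r)

theorem eq_zero_of_forall_val_add_lt_iff (hr : 0 < r) (hrn : r < n) {c : ZMod n}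
    (h : ∀ x : ZMod n, (x + c).val < r ↔ x.val < r) : c = 0 := by
  by_contra hc
  have hc0 : 0 < c.val := val_pos.mpr hc
  have hcn := c.val_lt
  -- Either `r - 1` is moved out of `[0, r)` or `r` is moved into it.
  rcases lt_or_ge (r - 1 + c.val) n with hlt | hge
  · have := (h (r - 1 : ℕ)).mpr (by rw [val_cast_of_lt (by omega)]; omega)
    rw [val_add, val_cast_of_lt (by omega), Nat.mod_eq_of_lt hlt] at this
    omega
  · have := (h r).mp (by
      rw [val_add, val_cast_of_lt hrn, Nat.mod_eq_sub_mod (by omega), Nat.mod_eq_of_lt (by omega)]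
      omega)
    rw [val_cast_of_lt hrn] at this
    omega

end ZMod

theorem Nat.choose_pred_mul_factorial_mul_factorial {n r : ℕ} (hr : 0 < r) (hrn : r ≤ n) :
    (n - 1).choose (r - 1) * (r ! * (n - r)!) = r * (n - 1)! := by
  have h := Nat.choose_mul_factorial_mul_factorial (n := n - 1) (k := r - 1) (by omega)
  rw [show n - 1 - (r - 1) = n - r by omega] at h
  rw [← Nat.mul_factorial_pred hr.ne', ← h]
  ring

theorem exists_lt_and_le_add {A : ℕ → ℕ} {m L k : ℕ} (h0 : A 0 ≤ m)
    (hstep : ∀ i, A (i + 1) ≤ A i + L) (hk : m + L < A k) : ∃ j < k, m < A j ∧ A j ≤ m + L := by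
  induction k with
  | zero => omega
  | succ k ih =>
    by_cases hAk : m + L < A k
    · obtain ⟨j, hjk, hj⟩ := ih hAk
      exact ⟨j, by omega, hj⟩
    · exact ⟨k, by omega, by linarith [hstep k], by omega⟩

theorem lt_of_le_mul_tsub {n k r : ℕ} [NeZero n] (h : n ≤ k * (n - r)) : r < n := by
  by_contra! hnr
  rw [Nat.sub_eq_zero_of_le hnr, mul_zero] at h
  exact NeZero.ne n (Nat.le_zero.mp h)

section Circle

variable {n : ℕ} (S : Finset (ZMod n))

noncomputable def distBelow (z : ZMod n) : ℕ := sInf {d : ℕ | z - d ∈ S}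

noncomputable def lastBelow (z : ZMod n) : ZMod n := z - distBelow S z

variable {S}

theorem sub_notMem_of_lt_distBelow {z : ZMod n} {j : ℕ} (h : j < distBelow S z) : z - j ∉ S :=
  Nat.notMem_of_lt_sInf h

variable [NeZero n]

theorem lastBelow_mem (hS : S.Nonempty) (z : ZMod n) : lastBelow S z ∈ S := by
  obtain ⟨s, hs⟩ := hS
  exact Nat.sInf_mem (s := {d : ℕ | z - d ∈ S}) ⟨(z - s).val, by simpa [ZMod.natCast_zmod_val]⟩

theorem distBelow_lt (hS : S.Nonempty) (z : ZMod n) : distBelow S z < n := by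
  obtain ⟨s, hs⟩ := hS
  exact (Nat.sInf_le (show (z - s).val ∈ {d : ℕ | z - d ∈ S} by
    simpa [ZMod.natCast_zmod_val])).trans_lt (ZMod.val_lt _)

theorem lastBelow_sub (hS : S.Nonempty) {z : ZMod n} {j : ℕ} (hj : j ≤ distBelow S z) :
    lastBelow S (z - j) = lastBelow S z := by
  have hdist : distBelow S (z - j) = distBelow S z - j := by
    apply le_antisymm
    · apply Nat.sInf_le
      show z - j - ((distBelow S z - j : ℕ) : ZMod n) ∈ S
      rw [Nat.cast_sub hj, sub_sub, add_sub_cancel]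
      exact lastBelow_mem hS z
    · refine le_csInf ⟨_, lastBelow_mem hS (z - j)⟩ fun d hd => ?_
      by_contra! hlt
      refine sub_notMem_of_lt_distBelow (S := S) (z := z) (j := j + d) (by omega) ?_
      simpa [sub_sub] using hd
  rw [lastBelow, lastBelow, hdist, Nat.cast_sub hj]
  ring

theorem distBelow_le_card_fiber (hS : S.Nonempty) (z : ZMod n) :
    distBelow S z ≤ #{x ∈ Sᶜ | lastBelow S x = lastBelow S z} := by
  have hlt := distBelow_lt hS z
  refine card_range (distBelow S z) ▸ card_le_card_of_injOn (fun j => z - j) ?_ ?_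
  · intro j hj
    have hj : j < distBelow S z := mem_range.mp hj
    simp only [coe_filter, mem_compl, Set.mem_ofPred_eq]
    exact ⟨sub_notMem_of_lt_distBelow hj, lastBelow_sub hS hj.le⟩
  · intro j hj j' hj' h
    have h : (j : ZMod n) = j' := sub_right_injective h
    have hj : j < n := (mem_range.mp hj).trans hlt
    have hj' : j' < n := (mem_range.mp hj').trans hlt
    rw [← ZMod.val_cast_of_lt hj, ← ZMod.val_cast_of_lt hj', h]

theorem distBelow_le_card_compl (hS : S.Nonempty) (z : ZMod n) : distBelow S z ≤ #Sᶜ :=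
  (distBelow_le_card_fiber hS z).trans (card_filter_le _ _)

variable (S)

noncomputable def jump (L : ℕ) (x : ZMod n) : ZMod n := lastBelow S (x + L)

noncomputable def jumpLength (L : ℕ) (x : ZMod n) : ℕ := L - distBelow S (x + L)

variable {S}

theorem jump_mem (hS : S.Nonempty) (L : ℕ) (x : ZMod n) : jump S L x ∈ S :=
  lastBelow_mem hS _

theorem iterate_jump_mem (hS : S.Nonempty) (L : ℕ) {x : ZMod n} (hx : x ∈ S) (j : ℕ) :
    (jump S L)^[j] x ∈ S := by
  cases j with
  | zero => exact hx
  | succ j => rw [iterate_succ_apply']; exact jump_mem hS L _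

theorem jump_eq_add {L : ℕ} (hS : S.Nonempty) (hL : #Sᶜ ≤ L) (x : ZMod n) :
    jump S L x = x + jumpLength S L x := by
  rw [jump, lastBelow, jumpLength, Nat.cast_sub ((distBelow_le_card_compl hS _).trans hL)]
  ring

theorem iterate_jump_eq_add_sum {L : ℕ} (hS : S.Nonempty) (hL : #Sᶜ ≤ L) (x : ZMod n) (j : ℕ) :
    (jump S L)^[j] x = x + ↑(∑ i ∈ range j, jumpLength S L ((jump S L)^[i] x)) := by
  induction j with
  | zero => simp
  | succ j ih =>
    rw [iterate_succ_apply', jump_eq_add hS hL, ih, sum_range_succ, ih]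
    push_cast
    ring

theorem sum_distBelow_le_card_compl (hS : S.Nonempty) {L : ℕ} {y : ZMod n}
    (hy : y ∈ periodicPts (jump S L)) :
    ∑ i ∈ range (minimalPeriod (jump S L) y), distBelow S ((jump S L)^[i] y + L) ≤ #Sᶜ := by
  -- The shortfall of the jump from `g^[i] y` is witnessed by points outside `S` whose last point
  -- of `S` below is `g^[i + 1] y`; these sets are disjoint along the orbit.
  set g := jump S L
  set T := minimalPeriod g y
  have hinj : Set.InjOn (g^[·] (g y)) (range T) := by
    simpa only [coe_range, T, minimalPeriod_apply hy] using
      iterate_injOn_Iio_minimalPeriod (f := g) (x := g y)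
  calc ∑ i ∈ range T, distBelow S (g^[i] y + L)
      ≤ ∑ i ∈ range T, #{x ∈ Sᶜ | lastBelow S x = g^[i] (g y)} := by
        refine sum_le_sum fun i _ => ?_
        rw [← iterate_succ_apply, iterate_succ_apply']
        exact distBelow_le_card_fiber hS _
    _ = ∑ t ∈ (range T).image (g^[·] (g y)), #{x ∈ Sᶜ | lastBelow S x = t} :=
        (sum_image (f := fun t => #{x ∈ Sᶜ | lastBelow S x = t}) hinj).symm
    _ = #{x ∈ Sᶜ | lastBelow S x ∈ (range T).image (g^[·] (g y))} :=
        sum_card_fiberwise_eq_card_filter _ _ _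
    _ ≤ #Sᶜ := card_filter_le _ _

theorem exists_le_val_sub_iterate_jump {L k : ℕ} (hS : S.Nonempty) (hL : #Sᶜ ≤ L) (x : ZMod n)
    (hcover : n ≤ ∑ j ∈ range k, jumpLength S L ((jump S L)^[j] x)) (w : ZMod n) :
    ∃ j < k, n - L ≤ (w - (jump S L)^[j] x).val := by
  set A : ℕ → ℕ := fun j => ∑ i ∈ range j, jumpLength S L ((jump S L)^[i] x)
  set m := (w - x).val
  by_cases hm : n - L ≤ m
  · refine ⟨0, Nat.pos_of_ne_zero ?_, hm⟩
    rintro rfl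
    exact NeZero.ne n (Nat.le_zero.mp hcover)
  have hstep (i : ℕ) : A (i + 1) ≤ A i + L :=
    (sum_range_succ _ i).trans_le (Nat.add_le_add_left (Nat.sub_le _ _) _)
  have hAk : n ≤ A k := hcover
  obtain ⟨j, hjk, hmj, hjm⟩ := exists_lt_and_le_add (A := A) (by simp [A]) hstep
    (show m + L < A k by omega)
  refine ⟨j, hjk, ?_⟩
  have hval : w - (jump S L)^[j] x = -((A j - m : ℕ) : ZMod n) := by
    rw [iterate_jump_eq_add_sum hS hL, Nat.cast_sub hmj.le, ZMod.natCast_val, ZMod.cast_id', id]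
    ring
  have hlt : A j - m < n := by omega
  have hne : ((A j - m : ℕ) : ZMod n) ≠ 0 := by
    rw [Ne, ZMod.natCast_eq_zero_iff]
    exact Nat.not_dvd_of_pos_of_lt (Nat.sub_pos_of_lt hmj) hlt
  rw [hval, ZMod.neg_val, if_neg hne, ZMod.val_cast_of_lt hlt]
  omega

theorem exists_mem_le_sum_jumpLength {k L : ℕ} (hS : S.Nonempty) (hL : #Sᶜ < L)
    (hkL : n ≤ k * L) : ∃ x ∈ S, n ≤ ∑ j ∈ range k, jumpLength S L ((jump S L)^[j] x) := by
  obtain ⟨m, hy⟩ := exists_iterate_mem_periodicPts (jump S L) 0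
  set y := (jump S L)^[m] 0
  have hT := minimalPeriod_pos_of_mem_periodicPts hy
  have hyS : y ∈ S := by
    rw [← (isPeriodicPt_minimalPeriod _ y).eq, ← Nat.sub_add_cancel hT, iterate_succ_apply']
    exact jump_mem hS _ _
  have hdvd : n ∣ ∑ i ∈ range (minimalPeriod (jump S L) y), jumpLength S L ((jump S L)^[i] y) := by
    rw [← ZMod.natCast_eq_zero_iff]
    have := iterate_jump_eq_add_sum hS hL.le y (minimalPeriod (jump S L) y)
    rwa [(isPeriodicPt_minimalPeriod _ y).eq, left_eq_add] at this
  have hloss : minimalPeriod (jump S L) y * L <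
      ∑ i ∈ range (minimalPeriod (jump S L) y), jumpLength S L ((jump S L)^[i] y) + L := by
    have hsplit := sum_const_nat (s := range (minimalPeriod (jump S L) y))
      (f := fun i => jumpLength S L ((jump S L)^[i] y) + distBelow S ((jump S L)^[i] y + L))
      fun i _ => Nat.sub_add_cancel ((distBelow_le_card_compl hS _).trans hL.le)
    rw [sum_add_distrib, card_range] at hsplit
    have := sum_distBelow_le_card_compl hS hy
    omega
  obtain ⟨i, hi⟩ := exists_le_sum_range_add hT hdvd hloss hkL
  simp only [add_comm i, iterate_add_apply] at hi
  exact ⟨_, iterate_jump_mem hS L hyS i, hi⟩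

theorem card_le_of_forall_exists_val_sub_lt {k r : ℕ} (hkr : n ≤ k * (n - r))
    (hS : ∀ f : Fin k → ZMod n, (∀ i, f i ∈ S) → ∃ w, ∀ i, (w - f i).val < r) : #S ≤ r := by
  by_contra! hr
  have hrn := lt_of_le_mul_tsub hkr
  have hSne : S.Nonempty := card_pos.mp (by omega)
  have hcompl : #Sᶜ < n - r := by
    rw [card_compl, ZMod.card]
    omega
  obtain ⟨x, hx, hcover⟩ := exists_mem_le_sum_jumpLength hSne hcompl hkr
  obtain ⟨w, hw⟩ := hS (fun j => (jump S (n - r))^[j] x) fun j => iterate_jump_mem hSne _ hx j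
  obtain ⟨j, hjk, hj⟩ := exists_le_val_sub_iterate_jump hSne hcompl.le x hcover w
  have := hw ⟨j, hjk⟩
  simp only at this
  omega

end Circle

section CyclicIntervals

variable {n r : ℕ}

-- `intervalCount n r F q` unfolds to `Nat.card {A // A ∈ F ∧ IsCyclicInterval n r A q}`.
def IsCyclicInterval (n r : ℕ) (A : Finset (Fin n)) (q : Quotient (rotSetoid n)) : Prop :=
  ∃ σ : ZMod n ≃ Fin n, Quotient.mk (rotSetoid n) σ = q ∧ ∃ x : ZMod n, A = cInterval n r σ x

theorem cInterval_eq_of_forall_eq_add {σ τ : ZMod n ≃ Fin n} {c : ZMod n}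
    (h : ∀ y, σ y = τ (y + c)) (x : ZMod n) : cInterval n r σ x = cInterval n r τ (x + c) :=
  image_congr fun i _ => by simp only [h, add_right_comm]

variable (r) in
def arrange (A : Finset (Fin n))
    (e : ({i : ZMod n // i.val < r} ≃ A) × ({i : ZMod n // ¬i.val < r} ≃ {v // v ∉ A})) :
    ZMod n ≃ Fin n :=
  (Equiv.sumCompl _).symm.trans ((Equiv.sumCongr e.1 e.2).trans (Equiv.sumCompl (· ∈ A)))

theorem arrange_apply_of_lt (A : Finset (Fin n)) (e) {i : ZMod n} (h : i.val < r) :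
    arrange r A e i = e.1 ⟨i, h⟩ := by
  rw [arrange, Equiv.trans_apply,
    Equiv.sumCompl_symm_apply_of_pos (p := fun a : ZMod n => a.val < r) h]
  rfl

theorem arrange_apply_of_not_lt (A : Finset (Fin n)) (e) {i : ZMod n} (h : ¬i.val < r) :
    arrange r A e i = e.2 ⟨i, h⟩ := by
  rw [arrange, Equiv.trans_apply,
    Equiv.sumCompl_symm_apply_of_neg (p := fun a : ZMod n => a.val < r) h]
  rfl

theorem arrange_mem_iff (A : Finset (Fin n)) (e) (i : ZMod n) :
    arrange r A e i ∈ A ↔ i.val < r := by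
  by_cases h : i.val < r
  · simp [arrange_apply_of_lt A e h, h]
  · simpa [arrange_apply_of_not_lt A e h, h] using (e.2 _).2

theorem arrange_injective (A : Finset (Fin n)) : Injective (arrange r A) := by
  intro e e' h
  refine Prod.ext (Equiv.ext fun i => Subtype.ext ?_) (Equiv.ext fun i => Subtype.ext ?_)
  · rw [← arrange_apply_of_lt A e i.2, ← arrange_apply_of_lt A e' i.2, h]
  · rw [← arrange_apply_of_not_lt A e i.2, ← arrange_apply_of_not_lt A e' i.2, h]

variable [NeZero n]

theorem mem_cInterval_iff (hrn : r ≤ n) (σ : ZMod n ≃ Fin n) (x : ZMod n) (v : Fin n) :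
    v ∈ cInterval n r σ x ↔ (σ.symm v - x).val < r := by
  rw [cInterval, mem_image]
  constructor
  · rintro ⟨i, hi, rfl⟩
    rw [mem_range] at hi
    rwa [σ.symm_apply_apply, add_sub_cancel_left, ZMod.val_cast_of_lt (hi.trans_le hrn)]
  · exact fun h => ⟨_, mem_range.mpr h, by
      rw [ZMod.natCast_zmod_val, add_sub_cancel, σ.apply_symm_apply]⟩

theorem intervalCount_le {k : ℕ} (hkr : n ≤ k * (n - r)) (F : Finset (Finset (Fin n)))
    (hkw : ∀ f : Fin k → Finset (Fin n), (∀ i, f i ∈ F) → ∃ v, ∀ i, v ∈ f i)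
    (q : Quotient (rotSetoid n)) : intervalCount n r F q ≤ r := by
  classical
  induction q using Quotient.inductionOn with | h σ => ?_
  have hrn := (lt_of_le_mul_tsub hkr).le
  set S : Finset (ZMod n) := {x | cInterval n r σ x ∈ F}
  have hS : #S ≤ r := card_le_of_forall_exists_val_sub_lt hkr fun f hf => by
    obtain ⟨v, hv⟩ := hkw (fun i => cInterval n r σ (f i)) fun i => (mem_filter.mp (hf i)).2
    exact ⟨σ.symm v, fun i => (mem_cInterval_iff hrn σ _ v).mp (hv i)⟩
  calc intervalCount n r F ⟦σ⟧ ≤ #(S.image (cInterval n r σ)) := by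
        refine (natCard_subtype_mem_and F _).trans_le (card_le_card fun A hA => ?_)
        obtain ⟨hAF, σ', hq, x, rfl⟩ := mem_filter.mp hA
        obtain ⟨c, hc⟩ := Quotient.exact hq
        rw [cInterval_eq_of_forall_eq_add hc]
        exact mem_image_of_mem _
          (mem_filter.mpr ⟨mem_univ _, by rwa [← cInterval_eq_of_forall_eq_add hc]⟩)
    _ ≤ #S := card_image_le
    _ ≤ r := hS

theorem cInterval_arrange (hrn : r ≤ n) (A : Finset (Fin n)) (e) :
    cInterval n r (arrange r A e) 0 = A := by
  ext v
  rw [mem_cInterval_iff hrn, sub_zero, ← arrange_mem_iff A e, Equiv.apply_symm_apply]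

theorem factorial_mul_factorial_le_card_isCyclicInterval (hr : 0 < r) (hrn : r < n)
    {A : Finset (Fin n)} (hA : #A = r) :
    r ! * (n - r)! ≤ Nat.card {q // IsCyclicInterval n r A q} := by
  classical
  have hpos : Fintype.card {i : ZMod n // i.val < r} = Fintype.card A := by
    rw [ZMod.card_val_lt hrn.le, Fintype.card_coe, hA]
  have hneg : Fintype.card {i : ZMod n // ¬i.val < r} = Fintype.card {v // v ∉ A} := by
    rw [Fintype.card_subtype_compl, Fintype.card_subtype_compl, hpos]
    simp
  have hcard : Nat.card (({i : ZMod n // i.val < r} ≃ A) ×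
      ({i : ZMod n // ¬i.val < r} ≃ {v // v ∉ A})) = r ! * (n - r)! := by
    rw [Nat.card_eq_fintype_card, Fintype.card_prod,
      Fintype.card_equiv (Fintype.equivOfCardEq hpos),
      Fintype.card_equiv (Fintype.equivOfCardEq hneg), Fintype.card_subtype_compl,
      ZMod.card_val_lt hrn.le, ZMod.card]
  rw [← hcard]
  refine Nat.card_le_card_of_injective (fun e => ⟨⟦arrange r A e⟧, arrange r A e, rfl, 0,
    (cInterval_arrange hrn.le A e).symm⟩) fun e e' h => arrange_injective A ?_
  -- A rotation relating two such arrangements preserves the positions `< r`, so it is trivial.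
  obtain ⟨c, hc⟩ := Quotient.exact (congrArg Subtype.val h)
  have hc0 : c = 0 := ZMod.eq_zero_of_forall_val_add_lt_iff hr hrn fun x => by
    rw [← arrange_mem_iff A e', ← arrange_mem_iff A e, hc]
  ext x
  simp [hc x, hc0]

theorem card_filter_mk_rotSetoid_eq (τ : ZMod n ≃ Fin n) [DecidableEq (Quotient (rotSetoid n))] :
    #{σ | Quotient.mk (rotSetoid n) σ = ⟦τ⟧} = n := by
  have hclass : ({σ | Quotient.mk (rotSetoid n) σ = ⟦τ⟧} : Finset (ZMod n ≃ Fin n)) =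
      univ.image fun c => (Equiv.addRight c).trans τ := by
    ext σ
    simp only [mem_filter, mem_univ, true_and, mem_image, Quotient.eq]
    constructor
    · rintro ⟨c, hc⟩
      exact ⟨c, Equiv.ext fun x => (hc x).symm⟩
    · rintro ⟨c, rfl⟩
      exact ⟨c, fun x => rfl⟩
  rw [hclass, card_image_of_injective _ fun c c' h => by
    simpa using congrArg (fun σ : ZMod n ≃ Fin n => σ 0) h, card_univ, ZMod.card]

theorem card_quotient_rotSetoid : Nat.card (Quotient (rotSetoid n)) = (n - 1)! := by
  classical
  have hsum := card_eq_sum_card_fiberwise (s := univ) (t := univ)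
    (f := Quotient.mk (rotSetoid n)) fun _ _ => mem_univ _
  rw [sum_const_nat fun q _ => q.inductionOn fun τ => card_filter_mk_rotSetoid_eq τ,
    Finset.card_univ, Fintype.card_equiv (ZMod.finEquiv n).symm.toEquiv, ZMod.card, Finset.card_univ,
    ← Nat.mul_factorial_pred (NeZero.ne n), mul_comm] at hsum
  rw [Nat.card_eq_fintype_card]
  exact (Nat.eq_of_mul_eq_mul_right (Nat.pos_of_ne_zero (NeZero.ne n)) hsum).symm

end CyclicIntervals

theorem few_unsaturated_orders_general (n r k : ℕ)
    (hr : k * r < (k - 1) * n)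
    (F : Finset (Finset (Fin n)))
    (hcard : ∀ A ∈ F, A.card = r)
    (hkw : ∀ f : Fin k → Finset (Fin n), (∀ i, f i ∈ F) → ∃ v, ∀ i, v ∈ f i)
    (δ : ℝ)
    (hF : ((1 : ℝ) - δ) * ((n - 1).choose (r - 1)) ≤ F.card) :
    (Nat.card {q : Quotient (rotSetoid n) // intervalCount n r F q < r} : ℝ)
      ≤ r * δ * (n - 1).factorial := by
  have : NeZero n := ⟨by rintro rfl; simp at hr⟩
  have hkr : n ≤ k * (n - r) := by
    rw [Nat.sub_one_mul] at hr
    rw [Nat.mul_sub]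
    omega
  obtain rfl | hr0 := Nat.eq_zero_or_pos r
  · simp
  have hrn := lt_of_le_mul_tsub hkr
  have hcount : #F * (r ! * (n - r)!) + Nat.card {q // intervalCount n r F q < r} ≤
      r * Nat.card (Quotient (rotSetoid n)) :=
    card_mul_add_card_lt_le_mul F (IsCyclicInterval n r) (intervalCount_le hkr F hkw)
      fun A hA => factorial_mul_factorial_le_card_isCyclicInterval hr0 hrn (hcard A hA)
  rw [card_quotient_rotSetoid] at hcount
  have hcountR : (#F * (r ! * (n - r)!) + Nat.card {q // intervalCount n r F q < r} : ℝ) ≤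
      r * (n - 1)! := by exact_mod_cast hcount
  have hbinom : ((n - 1).choose (r - 1) * (r ! * (n - r)!) : ℝ) = r * (n - 1)! := by
    exact_mod_cast Nat.choose_pred_mul_factorial_mul_factorial hr0 hrn.le
  have hlower := mul_le_mul_of_nonneg_right hF (by positivity : (0 : ℝ) ≤ r ! * (n - r)!)
  rw [mul_assoc, hbinom] at hlower
  linarith

/-- If a `k`-wise intersecting family of `r`-subsets of `[n]` (with `r < (k-1)n/k`) has
size at least `(1-δ) C(n-1, r-1)`, then the number of unsaturated cyclic orders (those in
which fewer than `r` members of `F` are intervals) is at most `r δ (n-1)!`. -/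
theorem few_unsaturated_orders (n r k : ℕ) (hk : 2 ≤ k)
    (hr : k * r < (k - 1) * n)
    (F : Finset (Finset (Fin n)))
    (hcard : ∀ A ∈ F, A.card = r)
    (hkw : ∀ f : Fin k → Finset (Fin n), (∀ i, f i ∈ F) → ∃ v, ∀ i, v ∈ f i)
    (δ : ℝ)
    (hF : ((1 : ℝ) - δ) * ((n - 1).choose (r - 1)) ≤ F.card) :
    (Nat.card {q : Quotient (rotSetoid n) // intervalCount n r F q < r} : ℝ)
      ≤ r * δ * (n - 1).factorial :=
  few_unsaturated_orders_general n r k hr F hcard hkw δ hF
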